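/- Consider the map from bounded complexes of finitely generated free abelian groups to differential Z-structures sending a complex X (with components Xⁱ and differentials dⁱ) to (⊕ᵢ Xⁱ, e) where e is the sum of the differentials (the 'push-down' functor). Then every perfect differential Z-structure (N,e) (N free abelian of finite rank, e² = 0) lies in the image up to isomorphism; explicitly (N,e) ≅ η(0 → I →^μ Ker e → 0) where I ≅ Im e and μ is induced by e. However, the analogous push-down on all finitely generated abelian groups is not dense: (Z/p², multiplication by p) is not isomorphic to η(X) for any bounded complex X of finitely generated abelian groups. -/

import Mathlib

/-! If `e² = 0` and `im e` is projective (e.g. free, which is automatic over `ℤ` when `N` is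
free of finite rank), a section `s` of `e : N ↠ im e` gives `N ≅ im e ⊕ ker e` via
`x ↦ (e x, x - s (e x))`, and under this isomorphism `e` becomes the inclusion `im e ⊆ ker e`.

`ℤ/p²` is indecomposable: if `y ∈ ⊕ᵢ Xⁱ` corresponds to `1`, it has order `p²`, so some component
`yᵢ` already has order `p²`, and since `y` generates, every other summand `Xʲ` is killed. The total
differential of a complex concentrated in one degree vanishes, while multiplication by `p` does not. -/

open DirectSum

/-- The total differential of a complex: the push-down functor `η` sends a complex
`(Xⁱ, dⁱ)` of abelian groups to the differential structure `(⊕ᵢ Xⁱ, e)` where `e` is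
the sum of the differentials. -/
noncomputable def totalDiff (X : ℤ → ModuleCat.{0} ℤ) (d : ∀ i : ℤ, X i →ₗ[ℤ] X (i + 1)) :
    (⨁ i, X i) →ₗ[ℤ] ⨁ i, X i :=
  (@DirectSum.toModule ℤ _ ℤ (fun j => X j) _ _ _ (⨁ i, X i) _ DirectSum.instModule
    fun i => (DirectSum.lof ℤ ℤ (fun j => X j) (i + 1)) ∘ₗ d i).toAddMonoidHom.toIntLinearMap

open LinearMap

theorem LinearMap.exists_linearEquiv_range_prod_ker {R M : Type*} [Ring R] [AddCommGroup M]
    [Module R M] (e : M →ₗ[R] M) (he : e ∘ₗ e = 0) [Module.Projective R (range e)] :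
    ∃ φ : M ≃ₗ[R] (range e × ker e),
      ∀ x, φ (e x) = (0, Submodule.inclusion (range_le_ker_iff.mpr he) (φ x).1) := by
  obtain ⟨s, hs⟩ :=
    Module.projective_lifting_property e.rangeRestrict id e.surjective_rangeRestrict
  have hs' : ∀ m, e.rangeRestrict (s m) = m := LinearMap.congr_fun hs
  have hes : ∀ m, e (s m) = m := fun m => congrArg Subtype.val (hs' m)
  have hee : ∀ x, e (e x) = 0 := LinearMap.congr_fun he
  have hker : ∀ x ∈ ker e, e.rangeRestrict x = 0 := fun x hx => Subtype.ext hx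
  let π : M →ₗ[R] ker e := (id - s ∘ₗ e.rangeRestrict).codRestrict (ker e) fun x => by simp [hes]
  refine ⟨.ofLinearMap (e.rangeRestrict.prod π) (s.coprod (ker e).subtype) ?_ ?_, fun x => ?_⟩
  · ext m <;> simp [π, hs', hker]
  · ext x; simp [π]
  · ext <;> simp [π, hee, hker]

theorem LinearMap.exists_linearEquiv_range_prod_ker_of_free {R M : Type*} [CommRing R]
    [IsDomain R] [IsPrincipalIdealRing R] [AddCommGroup M] [Module R M] [Module.Free R M]
    [Module.Finite R M] (e : M →ₗ[R] M) (he : e ∘ₗ e = 0) :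
    ∃ φ : M ≃ₗ[R] (range e × ker e),
      ∀ x, φ (e x) = (0, Submodule.inclusion (range_le_ker_iff.mpr he) (φ x).1) :=
  e.exists_linearEquiv_range_prod_ker he

namespace DirectSum

variable {ι : Type*} {X : ι → Type*} [∀ i, AddCommGroup (X i)]

theorem exists_addOrderOf_apply_eq_prime_pow {p k : ℕ} [Fact p.Prime] {y : ⨁ i, X i}
    (hy : addOrderOf y = p ^ (k + 1)) : ∃ i, addOrderOf (y i) = p ^ (k + 1) := by
  have hpk : p ^ k • y ≠ 0 :=
    nsmul_ne_zero_of_lt_addOrderOf (pow_ne_zero _ (Fact.out : p.Prime).ne_zero)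
      (hy ▸ Nat.pow_lt_pow_succ (Fact.out : p.Prime).one_lt)
  obtain ⟨i, hi⟩ : ∃ i, p ^ k • y i ≠ 0 := by
    by_contra! h
    exact hpk (DFinsupp.ext fun i => (DFinsupp.nsmul_apply _ y i).trans (h i))
  refine ⟨i, addOrderOf_eq_prime_pow hi ?_⟩
  rw [← DFinsupp.nsmul_apply, ← hy, addOrderOf_nsmul_eq_zero, zero_apply]

theorem subsingleton_of_zmultiples_eq_top [DecidableEq ι] {y : ⨁ i, X i}
    (hy : AddSubgroup.zmultiples y = ⊤) {i₀ : ι} (hi₀ : addOrderOf (y i₀) = addOrderOf y) {j : ι} (hj : j ≠ i₀) :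
    Subsingleton (X j) := by
  refine subsingleton_of_forall_eq 0 fun x => ?_
  obtain ⟨n, hn⟩ := AddSubgroup.mem_zmultiples_iff.mp (hy ▸ AddSubgroup.mem_top (of X j x))
  have hn₀ : n • y i₀ = 0 := by
    rw [← DFinsupp.zsmul_apply, hn]
    exact of_eq_of_ne j i₀ x hj.symm
  rw [← addOrderOf_dvd_iff_zsmul_eq_zero, hi₀, addOrderOf_dvd_iff_zsmul_eq_zero, hn] at hn₀
  exact of_injective j (hn₀.trans (map_zero _).symm)

end DirectSum

section totalDiff

variable (X : ℤ → ModuleCat.{0} ℤ) (d : ∀ i : ℤ, X i →ₗ[ℤ] X (i + 1))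

theorem totalDiff_of (i : ℤ) (x : X i) :
    totalDiff X d (of (fun j => X j) i x) = of (fun j => X j) (i + 1) (d i x) := by
  simp only [totalDiff, AddMonoidHom.coe_toIntLinearMap, LinearMap.toAddMonoidHom_coe]
  rw [← lof_eq_of ℤ, toModule_lof]
  rfl

theorem totalDiff_eq_zero_of_subsingleton {i₀ : ℤ} (h : ∀ j ≠ i₀, Subsingleton (X j)) :
    totalDiff X d = 0 := by
  refine LinearMap.ext fun y => ?_
  rw [LinearMap.zero_apply]
  induction y using DirectSum.induction_on with
  | zero => exact map_zero _
  | of i x =>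
    rw [totalDiff_of]
    by_cases hi : i = i₀
    · have := h (i + 1) (by omega)
      rw [Subsingleton.elim (d i x) 0, map_zero]
    · have := h i hi
      rw [Subsingleton.elim x 0, map_zero, map_zero]
  | add y z hy hz => rw [map_add, hy, hz, add_zero]

end totalDiff

/-- (a) Every perfect differential `ℤ`-structure `(N, e)` — `N` free abelian of finite
rank, `e² = 0` — is isomorphic to the push-down of the width-2 complex
`0 → I → ker e → 0` with `I ≅ im e` and differential induced by `e`: there is an
isomorphism `N ≅ im e ⊕ ker e` carrying `e` to `(m, k) ↦ (0, ι m)`, `ι` the inclusion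
`im e ⊆ ker e`.
(b) The analogous push-down on all finitely generated abelian groups is not dense: for
a prime `p`, `(ℤ/p², multiplication by p)` is not isomorphic to the push-down of any
bounded complex of finitely generated abelian groups. -/
theorem stmt19 :
    (∀ (N : Type) [AddCommGroup N] [Module ℤ N] [Module.Free ℤ N] [Module.Finite ℤ N]
      (e : N →ₗ[ℤ] N) (he : e ∘ₗ e = 0),
      ∃ φ : N ≃ₗ[ℤ] (LinearMap.range e × LinearMap.ker e),
        ∀ x, φ (e x) =
          (0, Submodule.inclusion (LinearMap.range_le_ker_iff.mpr he) (φ x).1)) ∧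
    (∀ p : ℕ, p.Prime →
      ¬ ∃ (X : ℤ → ModuleCat.{0} ℤ) (d : ∀ i : ℤ, X i →ₗ[ℤ] X (i + 1)),
        (∀ i, Module.Finite ℤ (X i)) ∧
        (∀ i, (d (i + 1)) ∘ₗ (d i) = 0) ∧
        (∃ N : ℕ, ∀ i : ℤ, (N : ℤ) < |i| → Subsingleton (X i)) ∧
        ∃ φ : ZMod (p ^ 2) ≃ₗ[ℤ] (⨁ i, X i),
          ∀ x : ZMod (p ^ 2), φ ((p : ZMod (p ^ 2)) * x) = totalDiff X d (φ x)) := by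
  refine ⟨fun N _ iM _ _ e he => ?_, ?_⟩
  · -- ℤ-module structures are unique; the canonical one is the one instance search uses for
    -- `range e × ker e` in the statement.
    obtain rfl : iM = AddCommGroup.toIntModule N := Subsingleton.elim _ _
    exact e.exists_linearEquiv_range_prod_ker_of_free he
  rintro p hp ⟨X, d, -, -, -, φ, hφ⟩
  have := Fact.mk hp
  have hgen : AddSubgroup.zmultiples (φ 1) = ⊤ := eq_top_iff.mpr fun z _ =>
    AddSubgroup.mem_zmultiples_iff.mpr ⟨(φ.symm z).cast, by
      rw [← map_zsmul, zsmul_one, ZMod.intCast_zmod_cast, φ.apply_symm_apply]⟩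
  have horder : addOrderOf (φ 1) = p ^ (1 + 1) :=
    (φ.toAddEquiv.addOrderOf_eq 1).trans (ZMod.addOrderOf_one _)
  obtain ⟨i₀, hi₀⟩ := exists_addOrderOf_apply_eq_prime_pow horder
  have hzero : totalDiff X d = 0 := totalDiff_eq_zero_of_subsingleton X d fun j hj =>
    subsingleton_of_zmultiples_eq_top hgen (hi₀.trans horder.symm) hj
  have hp0 : (p : ZMod (p ^ 2)) = 0 := by simpa [hzero] using hφ 1
  have : p ^ 2 ∣ p ^ 1 := by simpa using (ZMod.natCast_eq_zero_iff p (p ^ 2)).mp hp0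
  exact absurd ((Nat.pow_dvd_pow_iff_le_right hp.one_lt).mp this) (by norm_num)
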